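/- Generalized Pythagorean theorem (algebraic form): let α > 0, let φ be α-exponentially concave with α-conjugate ψ and dual coordinate η = D^{(α)}φ. For points p, q, r with coordinates (ξ_p,η_p), (ξ_q,η_q), (ξ_r,η_r), the Pythagorean relation D[q:p] + D[r:q] = D[r:p] holds if and only if (1 + α ξ_q·η_p)(1 + α ξ_r·η_q) = (1 + α ξ_r·η_p)(1 + α ξ_q·η_q), where D[b:a] = c^{(α)}(ξ_b, η_a) - φ(ξ_b) - ψ(η_a). -/

import Mathlib

/-!
The Fenchel identity at `q` turns `φ(ξ_q) + ψ(η_q)` into `c^{(α)}(ξ_q, η_q)`, so the defect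
`D[q:p] + D[r:q] - D[r:p]` is `(1/α)` times the logarithm of the cross ratio
`(1 + α ξ_q·η_p)(1 + α ξ_r·η_q) / ((1 + α ξ_r·η_p)(1 + α ξ_q·η_q))`; it vanishes iff that ratio is `1`.
-/

open scoped RealInnerProductSpace

lemma Real.log_add_log_eq_log_add_log_iff {a b c d : ℝ} (ha : 0 < a) (hb : 0 < b) (hc : 0 < c)
    (hd : 0 < d) : log a + log b = log c + log d ↔ a * b = c * d := by
  rw [← log_mul ha.ne' hb.ne', ← log_mul hc.ne' hd.ne']
  exact log_injOn_pos.eq_iff (mul_pos ha hb) (mul_pos hc hd)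

lemma divergence_pythagorean_iff {c A B C Q φq φr ψp ψq : ℝ} (hc : c ≠ 0)
    (hFq : φq + ψq = c * Q) :
    (c * A - φq - ψp) + (c * B - φr - ψq) = c * C - φr - ψp ↔ A + B = C + Q := by
  have defect : (c * A - φq - ψp) + (c * B - φr - ψq) - (c * C - φr - ψp)
      = c * (A + B - (C + Q)) := by
    linear_combination -hFq
  rw [← sub_eq_zero, defect, mul_eq_zero, sub_eq_zero, or_iff_right hc]

theorem stmt18 {d : ℕ} (α : ℝ) (hα : 0 < α)
    (ξq ξr ηp ηq : EuclideanSpace ℝ (Fin d))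
    (φq φr ψp ψq : ℝ)
    (hqp : 0 < 1 + α * ⟪ξq, ηp⟫) (hrq : 0 < 1 + α * ⟪ξr, ηq⟫)
    (hrp : 0 < 1 + α * ⟪ξr, ηp⟫) (hqq : 0 < 1 + α * ⟪ξq, ηq⟫)
    -- generalized Fenchel identities `φ(ξ) + ψ(η) = c^{(α)}(ξ, η)`:
    (hFq : φq + ψq = (1/α) * Real.log (1 + α * ⟪ξq, ηq⟫)) :
    (((1/α) * Real.log (1 + α * ⟪ξq, ηp⟫) - φq - ψp) +
      ((1/α) * Real.log (1 + α * ⟪ξr, ηq⟫) - φr - ψq) =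
      ((1/α) * Real.log (1 + α * ⟪ξr, ηp⟫) - φr - ψp)) ↔
    (1 + α * ⟪ξq, ηp⟫) * (1 + α * ⟪ξr, ηq⟫) =
      (1 + α * ⟪ξr, ηp⟫) * (1 + α * ⟪ξq, ηq⟫) :=
  (divergence_pythagorean_iff (one_div_ne_zero hα.ne') hFq).trans
    (Real.log_add_log_eq_log_add_log_iff hqp hrq hrp hqq)
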